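/- arXiv:1007.3489 — 7 statements merged into one kernel-verified Lean document; each statement's English description precedes it below -/
import Mathlib

section
/- If Φ : X → L(H,K) satisfies Φ(x)*Φ(y) = φ(⟨x,y⟩) for all x,y ∈ X, where φ : A → L(H) is a completely positive (in particular bounded) linear map, then Φ is linear and continuous, with ‖Φ(x)‖² ≤ ‖φ‖·‖x‖² for all x ∈ X. -/
/-!
An operator `D : H →L K` lying in the span of the range of `Φ` and annihilated by every
`Φ(w)*` satisfies `D* D = 0`, hence `D = 0` by the C*-identity. Since `Φ(w)* Φ(y) = φ⟨w, y⟩`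
is linear in `y`, this applies to `D = Φ(x + y) - Φ x - Φ y` and to `D = Φ(c • x) - c • Φ x`.
The norm bound is the C*-identity `‖Φ x‖² = ‖Φ(x)* Φ(x)‖ = ‖φ⟨x, x⟩‖`.
-/

noncomputable section

open ContinuousLinearMap

/-- An element of the form `star c * c` (positivity in a star ring). -/
def StarPos {B : Type*} [Mul B] [Star B] (b : B) : Prop := ∃ c : B, b = star c * c

/-- Complete positivity of a `ℂ`-linear map between star rings. -/
def IsCPMap {A B : Type*} [NonUnitalRing A] [StarRing A] [Module ℂ A]
    [NonUnitalRing B] [StarRing B] [Module ℂ B] (φ : A →ₗ[ℂ] B) : Prop :=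
  ∀ (n : ℕ) (M : Matrix (Fin n) (Fin n) A), StarPos M → StarPos (M.map ⇑φ)

namespace ContinuousLinearMap

variable {𝕜 H K X : Type*} [RCLike 𝕜]
  [NormedAddCommGroup H] [InnerProductSpace 𝕜 H] [CompleteSpace H]
  [NormedAddCommGroup K] [InnerProductSpace 𝕜 K] [CompleteSpace K]

theorem eq_zero_of_mem_span_of_adjoint_comp_eq_zero {s : Set (H →L[𝕜] K)} {D : H →L[𝕜] K}
    (hD : D ∈ Submodule.span 𝕜 s) (h : ∀ T ∈ s, adjoint T ∘L D = 0) : D = 0 := by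
  have hspan : ∀ T ∈ Submodule.span 𝕜 s, adjoint T ∘L D = 0 := fun T hT => by
    induction hT using Submodule.span_induction with
    | mem T hT => exact h T hT
    | zero => rw [map_zero, zero_comp]
    | add S T _ _ hS hT => rw [map_add, add_comp, hS, hT, add_zero]
    | smul c T _ hT => rw [map_smulₛₗ, smul_comp, hT, smul_zero]
  exact adjoint_comp_self_eq_zero_iff.mp (hspan D hD)

variable [AddCommGroup X] {Φ : X → H →L[𝕜] K}

theorem map_add_of_adjoint_comp_map_add
    (h : ∀ w x y, adjoint (Φ w) ∘L Φ (x + y) = adjoint (Φ w) ∘L Φ x + adjoint (Φ w) ∘L Φ y)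
    (x y : X) : Φ (x + y) = Φ x + Φ y := by
  refine sub_eq_zero.mp (eq_zero_of_mem_span_of_adjoint_comp_eq_zero (s := Set.range Φ) ?_ ?_)
  · exact sub_mem (Submodule.subset_span ⟨_, rfl⟩)
      (add_mem (Submodule.subset_span ⟨_, rfl⟩) (Submodule.subset_span ⟨_, rfl⟩))
  · rintro _ ⟨w, rfl⟩
    rw [comp_sub, comp_add, h, sub_self]

theorem map_smul_of_adjoint_comp_map_smul [Module 𝕜 X]
    (h : ∀ w (c : 𝕜) x, adjoint (Φ w) ∘L Φ (c • x) = c • adjoint (Φ w) ∘L Φ x)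
    (c : 𝕜) (x : X) : Φ (c • x) = c • Φ x := by
  refine sub_eq_zero.mp (eq_zero_of_mem_span_of_adjoint_comp_eq_zero (s := Set.range Φ) ?_ ?_)
  · exact sub_mem (Submodule.subset_span ⟨_, rfl⟩)
      (Submodule.smul_mem _ c (Submodule.subset_span ⟨_, rfl⟩))
  · rintro _ ⟨w, rfl⟩
    rw [comp_sub, comp_smul, h, sub_self]

end ContinuousLinearMap

theorem stmt_1_general
    {A : Type*} [NormedRing A] [NormedAlgebra ℂ A]
    {H K : Type*} [NormedAddCommGroup H] [InnerProductSpace ℂ H] [CompleteSpace H]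
    [NormedAddCommGroup K] [InnerProductSpace ℂ K] [CompleteSpace K]
    {X : Type*} [AddCommGroup X] [Module ℂ X]
    (E : X → X → A)
    (hE_add : ∀ x y z, E x (y + z) = E x y + E x z)
    (hE_smul : ∀ (c : ℂ) x y, E x (c • y) = c • E x y)
    (Φ : X → H →L[ℂ] K) (φ : A →L[ℂ] (H →L[ℂ] H))
    (hΦ : ∀ x y, adjoint (Φ x) ∘L Φ y = φ (E x y)) :
    (∀ x y, Φ (x + y) = Φ x + Φ y) ∧ (∀ (c : ℂ) (x : X), Φ (c • x) = c • Φ x) ∧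
      ∀ x, ‖Φ x‖ ^ 2 ≤ ‖φ‖ * ‖E x x‖ := by
  refine ⟨map_add_of_adjoint_comp_map_add fun w x y => ?_,
    map_smul_of_adjoint_comp_map_smul fun w c x => ?_, fun x => ?_⟩
  · rw [hΦ, hΦ, hΦ, hE_add, map_add]
  · rw [hΦ, hΦ, hE_smul, map_smul]
  · calc ‖Φ x‖ ^ 2 = ‖adjoint (Φ x) ∘L Φ x‖ := by rw [norm_adjoint_comp_self, sq]
      _ = ‖φ (E x x)‖ := by rw [hΦ]
      _ ≤ ‖φ‖ * ‖E x x‖ := φ.le_opNorm _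

/-- a map `Φ : X → L(H,K)` satisfying `Φ(x)*Φ(y) = φ(⟨x,y⟩)` for a
completely positive (bounded) linear `φ` is linear and continuous, with
`‖Φ(x)‖² ≤ ‖φ‖·‖x‖²` (recall `‖x‖² = ‖⟨x,x⟩‖`). -/
theorem stmt_1
    {A : Type*} [NormedRing A] [StarRing A] [CStarRing A] [NormedAlgebra ℂ A]
    [CompleteSpace A] [StarModule ℂ A]
    {H K : Type*} [NormedAddCommGroup H] [InnerProductSpace ℂ H] [CompleteSpace H]
    [NormedAddCommGroup K] [InnerProductSpace ℂ K] [CompleteSpace K]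
    {X : Type*} [AddCommGroup X] [Module ℂ X]
    (E : X → X → A)
    (hE_add : ∀ x y z, E x (y + z) = E x y + E x z)
    (hE_smul : ∀ (c : ℂ) x y, E x (c • y) = c • E x y)
    (hE_star : ∀ x y, star (E x y) = E y x)
    (hE_pos : ∀ x, StarPos (E x x))
    (Φ : X → H →L[ℂ] K) (φ : A →L[ℂ] (H →L[ℂ] H))
    (hcp : IsCPMap (φ : A →ₗ[ℂ] (H →L[ℂ] H)))
    (hΦ : ∀ x y, adjoint (Φ x) ∘L Φ y = φ (E x y)) :
    (∀ x y, Φ (x + y) = Φ x + Φ y) ∧ (∀ (c : ℂ) (x : X), Φ (c • x) = c • Φ x) ∧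
      ∀ x, ‖Φ x‖ ^ 2 ≤ ‖φ‖ * ‖E x x‖ :=
  stmt_1_general E hE_add hE_smul Φ φ hΦ
end
end

section
/- Let (π_X, v, w, H, K) be a covariant representation of (G,η,X), let V ∈ L(H), let W ∈ L(K) be a coisometry, and let t ↦ u_t, t ↦ u'_t be unitary representations of G on H and K such that v_t V = V u_t and w_t W = W u'_t for all t ∈ G. Then Φ(x) := W* π_X(x) V defines a completely positive map on X which is (u',u)-covariant: Φ(η_t(x)) = u'_t Φ(x) u_t* for all x ∈ X and t ∈ G. -/
/-!
Since `W` is a coisometry, `Φ(x)* Φ(y) = V* π_X(x)* W W* π_X(y) V = V* π_A(⟨x, y⟩) V`, and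
`a ↦ V* π_A(a) V` is completely positive as a compression of a *-homomorphism. Covariance follows
from `π_X(η_t x) = w_t π_X(x) v_t*` once one knows that an operator intertwining two unitaries also
intertwines their adjoints: `v_t* V = V u_t*` and `W* w_t = u'_t W*`.
-/

noncomputable section

open ContinuousLinearMap

/-- A unitary representation of a group `G` on a Hilbert space. -/
def IsUnitaryRep {G H' : Type*} [Group G] [NormedAddCommGroup H']
    [InnerProductSpace ℂ H'] [CompleteSpace H'] (v : G → H' →L[ℂ] H') : Prop :=
  v 1 = 1 ∧ (∀ s t, v (s * t) = v s ∘L v t) ∧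
    ∀ t, adjoint (v t) ∘L v t = 1 ∧ v t ∘L adjoint (v t) = 1

namespace IsCPMap

variable {A B C : Type*} [NonUnitalRing A] [StarRing A] [Module ℂ A]
  [NonUnitalRing B] [StarRing B] [Module ℂ B] [NonUnitalRing C] [StarRing C] [Module ℂ C]

theorem comp {ψ : B →ₗ[ℂ] C} {φ : A →ₗ[ℂ] B} (hψ : IsCPMap ψ) (hφ : IsCPMap φ) :
    IsCPMap (ψ ∘ₗ φ) :=
  fun n M hM => by simpa only [LinearMap.coe_comp, Matrix.map_map] using hψ n _ (hφ n M hM)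

theorem of_starHomClass {F : Type*} [FunLike F A B] [NonUnitalRingHomClass F A B]
    [StarHomClass F A B] [LinearMapClass F ℂ A B] (π : F) : IsCPMap (π : A →ₗ[ℂ] B) := by
  rintro n M ⟨c, rfl⟩
  refine ⟨c.map π, ?_⟩
  simp only [LinearMap.coe_coe, Matrix.map_mul, Matrix.star_eq_conjTranspose]
  rw [Matrix.conjTranspose_map _ (map_star π)]

theorem mulLeftRight_star [SMulCommClass ℂ B B] [IsScalarTower ℂ B B] (b : B) :
    IsCPMap (LinearMap.mulLeftRight ℂ (star b, b)) := by
  rintro n M ⟨c, rfl⟩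
  refine ⟨c.map (· * b), Matrix.ext fun i j => ?_⟩
  simp only [Matrix.map_apply, LinearMap.mulLeftRight_apply, Matrix.mul_apply,
    Matrix.star_apply, Finset.mul_sum, Finset.sum_mul, star_mul, mul_assoc]

end IsCPMap

theorem star_mul_eq_mul_star_of_mul_eq_mul {R : Type*} [Monoid R] [Star R] {a b x : R}
    (ha : star a * a = 1) (hb : b * star b = 1) (h : a * x = x * b) :
    star a * x = x * star b :=
  calc star a * x = star a * x * (b * star b) := by rw [hb, mul_one]
    _ = star a * (a * x) * star b := by rw [h]; simp only [mul_assoc]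
    _ = star a * a * x * star b := by simp only [mul_assoc]
    _ = x * star b := by rw [ha, one_mul]

theorem adjoint_comp_adjoint_comp_of_coisometry {E H K : Type*}
    [NormedAddCommGroup E] [InnerProductSpace ℂ E] [CompleteSpace E]
    [NormedAddCommGroup H] [InnerProductSpace ℂ H] [CompleteSpace H]
    [NormedAddCommGroup K] [InnerProductSpace ℂ K] [CompleteSpace K]
    {W : H →L[ℂ] K} (hW : W ∘L adjoint W = 1) (S T : E →L[ℂ] K) :
    adjoint (adjoint W ∘L S) ∘L (adjoint W ∘L T) = adjoint S ∘L T := by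
  rw [adjoint_comp, adjoint_adjoint, comp_assoc, ← comp_assoc W, hW, one_def, id_comp]

theorem stmt_7_general
    {A : Type*} [NormedRing A] [StarRing A] [NormedAlgebra ℂ A]
    {H K : Type*} [NormedAddCommGroup H] [InnerProductSpace ℂ H] [CompleteSpace H]
    [NormedAddCommGroup K] [InnerProductSpace ℂ K] [CompleteSpace K]
    {X : Type*} {G : Type*} [Group G]
    (E : X → X → A)
    (η : G → X → X)
    (πX : X → H →L[ℂ] K) (πA : A →⋆ₐ[ℂ] (H →L[ℂ] H))
    (hrep : ∀ x y, adjoint (πX x) ∘L πX y = πA (E x y))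
    (v : G → H →L[ℂ] H) (hv : IsUnitaryRep v)
    (w : G → K →L[ℂ] K) (hw : IsUnitaryRep w)
    (hcov : ∀ t x, πX (η t x) = w t ∘L πX x ∘L adjoint (v t))
    (V : H →L[ℂ] H) (W : K →L[ℂ] K) (hW : W ∘L adjoint W = 1)
    (u : G → H →L[ℂ] H) (hu : IsUnitaryRep u)
    (u' : G → K →L[ℂ] K) (hu' : IsUnitaryRep u')
    (hVint : ∀ t, v t ∘L V = V ∘L u t)
    (hWint : ∀ t, w t ∘L W = W ∘L u' t) :
    (∃ ψ : A →ₗ[ℂ] (H →L[ℂ] H), IsCPMap ψ ∧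
        ∀ x y,
          adjoint (adjoint W ∘L πX x ∘L V) ∘L (adjoint W ∘L πX y ∘L V) = ψ (E x y)) ∧
      ∀ t x,
        adjoint W ∘L πX (η t x) ∘L V =
          u' t ∘L (adjoint W ∘L πX x ∘L V) ∘L adjoint (u t) := by
  have hvV : ∀ t, adjoint (v t) ∘L V = V ∘L adjoint (u t) := fun t =>
    star_mul_eq_mul_star_of_mul_eq_mul (hv.2.2 t).1 (hu.2.2 t).2 (hVint t)
  have hWw : ∀ t, adjoint W ∘L w t = u' t ∘L adjoint W := fun t => by
    have h := congrArg star
      (star_mul_eq_mul_star_of_mul_eq_mul (hw.2.2 t).1 (hu'.2.2 t).2 (hWint t))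
    simp only [star_mul, star_star] at h
    exact h
  refine ⟨⟨LinearMap.mulLeftRight ℂ (star V, V) ∘ₗ (πA : A →ₗ[ℂ] H →L[ℂ] H),
      (IsCPMap.mulLeftRight_star V).comp (IsCPMap.of_starHomClass πA), fun x y => ?_⟩,
    fun t x => ?_⟩
  · rw [adjoint_comp_adjoint_comp_of_coisometry hW, adjoint_comp, comp_assoc,
      ← comp_assoc (adjoint (πX x)), hrep]
    rfl
  · rw [hcov]
    simp only [comp_assoc]
    rw [hvV, ← comp_assoc (adjoint W), hWw]
    simp only [comp_assoc]

/-- given a covariant representation `(π_X,v,w,H,K)` of `(G,η,X)`,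
`V ∈ L(H)`, a coisometry `W ∈ L(K)`, and unitary representations `u, u'` with
`v_t V = V u_t` and `w_t W = W u'_t`, the map `Φ(x) = W* π_X(x) V` is a completely
positive map on `X` which is `(u',u)`-covariant. -/
theorem stmt_7
    {A : Type*} [NormedRing A] [StarRing A] [CStarRing A] [NormedAlgebra ℂ A]
    [CompleteSpace A] [StarModule ℂ A]
    {H K : Type*} [NormedAddCommGroup H] [InnerProductSpace ℂ H] [CompleteSpace H]
    [NormedAddCommGroup K] [InnerProductSpace ℂ K] [CompleteSpace K]
    {X : Type*} {G : Type*} [Group G]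
    (E : X → X → A)
    (hfull : (Submodule.span ℂ {a : A | ∃ x y, a = E x y}).topologicalClosure = ⊤)
    (η : G → X → X) (hη_one : ∀ x, η 1 x = x)
    (hη_mul : ∀ s t x, η (s * t) x = η s (η t x))
    (πX : X → H →L[ℂ] K) (πA : A →⋆ₐ[ℂ] (H →L[ℂ] H))
    (hrep : ∀ x y, adjoint (πX x) ∘L πX y = πA (E x y))
    (v : G → H →L[ℂ] H) (hv : IsUnitaryRep v)
    (w : G → K →L[ℂ] K) (hw : IsUnitaryRep w)
    (hcov : ∀ t x, πX (η t x) = w t ∘L πX x ∘L adjoint (v t))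
    (V : H →L[ℂ] H) (W : K →L[ℂ] K) (hW : W ∘L adjoint W = 1)
    (u : G → H →L[ℂ] H) (hu : IsUnitaryRep u)
    (u' : G → K →L[ℂ] K) (hu' : IsUnitaryRep u')
    (hVint : ∀ t, v t ∘L V = V ∘L u t)
    (hWint : ∀ t, w t ∘L W = W ∘L u' t) :
    (∃ ψ : A →ₗ[ℂ] (H →L[ℂ] H), IsCPMap ψ ∧
        ∀ x y,
          adjoint (adjoint W ∘L πX x ∘L V) ∘L (adjoint W ∘L πX y ∘L V) = ψ (E x y)) ∧
      ∀ t x,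
        adjoint W ∘L πX (η t x) ∘L V =
          u' t ∘L (adjoint W ∘L πX x ∘L V) ∘L adjoint (u t) :=
  stmt_7_general E η πX πA hrep v hv w hw hcov V W hW u hu u' hu' hVint hWint
end
end

section
/- Let Φ : X → L(H,K) and Ψ : X → L(H,K') be completely positive maps on a full Hilbert A-module X with the same underlying completely positive map φ : A → L(H). Then for all x₁,...,x_n ∈ X and h₁,...,h_n ∈ H, ‖Σᵢ Φ(xᵢ)hᵢ‖ = ‖Σᵢ Ψ(xᵢ)hᵢ‖; consequently there is a unique unitary operator U from [Φ(X)H] onto [Ψ(X)H] with U(Φ(x)h) = Ψ(x)h for all x ∈ X, h ∈ H. -/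
noncomputable section

open ContinuousLinearMap

/-!
The hypotheses give `⟪Φ x h, Φ y h'⟫ = ⟪h, φ ⟨x, y⟩ h'⟫ = ⟪Ψ x h, Ψ y h'⟫`, so the families
`Φ x h` and `Ψ x h` have the same Gram matrix. Hence both coordinates of any vector in the closed
span `G` of the pairs `(Φ x h, Ψ x h)` in `K × K'` have the same norm. The two projections of `G`
are therefore isometries, onto `[Φ(X)H]` and `[Ψ(X)H]` because `G` is complete, and `U` is the
second projection composed with the inverse of the first. It is unique because a continuous map
is determined by its values on a set spanning a dense subspace.
-/

open Set Submodule
open scoped InnerProductSpace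

theorem Submodule.ext_on_topologicalClosure_span {R M N : Type*} [Semiring R]
    [TopologicalSpace M] [AddCommMonoid M] [Module R M] [ContinuousConstSMul R M] [ContinuousAdd M]
    [TopologicalSpace N] [AddCommMonoid N] [Module R N] [T2Space N] {s : Set M}
    {f g : (span R s).topologicalClosure →L[R] N}
    (h : ∀ x (hx : x ∈ s), f ⟨x, le_topologicalClosure _ (subset_span hx)⟩ =
      g ⟨x, le_topologicalClosure _ (subset_span hx)⟩) :
    f = g := by
  have hle : (span R s).topologicalClosure ≤
      (LinearMap.eqLocus (f : _ →ₗ[R] N) g).map (span R s).topologicalClosure.subtype := by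
    refine topologicalClosure_minimal _ (span_le.2 fun x hx ↦ ⟨_, h x hx, rfl⟩) ?_
    exact (span R s).isClosed_topologicalClosure.isClosedEmbedding_subtypeVal.isClosedMap _
      (isClosed_eq f.continuous g.continuous)
  ext ⟨x, hx⟩
  obtain ⟨y, hy, rfl⟩ := hle hx
  exact hy

theorem Submodule.map_topologicalClosure_of_norm_eq {𝕜 M N : Type*} [NormedField 𝕜]
    [NormedAddCommGroup M] [NormedSpace 𝕜 M] [CompleteSpace M] [NormedAddCommGroup N]
    [NormedSpace 𝕜 N] (S : Submodule 𝕜 M) (f : M →L[𝕜] N)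
    (hf : ∀ p ∈ S.topologicalClosure, ‖f p‖ = ‖p‖) :
    S.topologicalClosure.map (f : M →ₗ[𝕜] N) = (S.map (f : M →ₗ[𝕜] N)).topologicalClosure := by
  refine le_antisymm (S.topologicalClosure_map f)
    (topologicalClosure_minimal _ (map_mono S.le_topologicalClosure) ?_)
  let g : S.topologicalClosure →ₗᵢ[𝕜] N := ⟨(f : M →ₗ[𝕜] N).domRestrict _, fun p ↦ hf p p.2⟩
  rw [← LinearMap.range_domRestrict]
  exact g.isometry.isClosedEmbedding.isClosed_range

theorem inner_apply_eq_of_adjoint_comp_eq {𝕜 H E F : Type*} [RCLike 𝕜]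
    [NormedAddCommGroup H] [InnerProductSpace 𝕜 H] [CompleteSpace H]
    [NormedAddCommGroup E] [InnerProductSpace 𝕜 E] [CompleteSpace E]
    [NormedAddCommGroup F] [InnerProductSpace 𝕜 F] [CompleteSpace F]
    {T T' : H →L[𝕜] E} {S S' : H →L[𝕜] F} (h : adjoint T ∘L T' = adjoint S ∘L S') (x y : H) :
    ⟪T x, T' y⟫_𝕜 = ⟪S x, S' y⟫_𝕜 := by
  rw [← adjoint_inner_right, ← comp_apply, h, comp_apply, adjoint_inner_right]

section Graph

variable {𝕜 E F : Type*} [NormedField 𝕜] [NormedAddCommGroup E] [NormedSpace 𝕜 E]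
  [NormedAddCommGroup F] [NormedSpace 𝕜 F]

def Submodule.fstIsometry (G : Submodule 𝕜 (E × F)) (hG : ∀ p ∈ G, ‖p.1‖ = ‖p.2‖) :
    G ≃ₗᵢ[𝕜] G.map (LinearMap.fst 𝕜 E F) :=
  (LinearIsometry.equivRange (⟨(LinearMap.fst 𝕜 E F).domRestrict G,
    fun p ↦ by simp [Prod.norm_def, hG p.1 p.2]⟩ : G →ₗᵢ[𝕜] E)).trans
    (.ofEq _ _ (LinearMap.range_domRestrict _ _))

def Submodule.sndIsometry (G : Submodule 𝕜 (E × F)) (hG : ∀ p ∈ G, ‖p.1‖ = ‖p.2‖) :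
    G ≃ₗᵢ[𝕜] G.map (LinearMap.snd 𝕜 E F) :=
  (LinearIsometry.equivRange (⟨(LinearMap.snd 𝕜 E F).domRestrict G,
    fun p ↦ by simp [Prod.norm_def, hG p.1 p.2]⟩ : G →ₗᵢ[𝕜] F)).trans
    (.ofEq _ _ (LinearMap.range_domRestrict _ _))

def Submodule.graphIsometry (G : Submodule 𝕜 (E × F)) (hG : ∀ p ∈ G, ‖p.1‖ = ‖p.2‖) :
    G.map (LinearMap.fst 𝕜 E F) ≃ₗᵢ[𝕜] G.map (LinearMap.snd 𝕜 E F) :=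
  (G.fstIsometry hG).symm.trans (G.sndIsometry hG)

theorem Submodule.graphIsometry_apply (G : Submodule 𝕜 (E × F)) (hG : ∀ p ∈ G, ‖p.1‖ = ‖p.2‖)
    {p : E × F} (hp : p ∈ G) :
    G.graphIsometry hG ⟨p.1, mem_map_of_mem hp⟩ = ⟨p.2, mem_map_of_mem hp⟩ := by
  have h : (G.fstIsometry hG).symm ⟨p.1, mem_map_of_mem hp⟩ = ⟨p, hp⟩ :=
    (G.fstIsometry hG).symm_apply_eq.2 rfl
  rw [graphIsometry, LinearIsometryEquiv.trans_apply, h]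
  rfl

end Graph

section GramEq

variable {𝕜 ι E F : Type*} [RCLike 𝕜] [NormedAddCommGroup E] [InnerProductSpace 𝕜 E]
  [NormedAddCommGroup F] [InnerProductSpace 𝕜 F] {v : ι → E} {w : ι → F}

theorem inner_fst_eq_inner_snd_of_mem_span_pair (hvw : ∀ i j, ⟪v i, v j⟫_𝕜 = ⟪w i, w j⟫_𝕜)
    {p q : E × F} (hp : p ∈ span 𝕜 (range fun i ↦ (v i, w i)))
    (hq : q ∈ span 𝕜 (range fun i ↦ (v i, w i))) :
    ⟪p.1, q.1⟫_𝕜 = ⟪p.2, q.2⟫_𝕜 := by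
  induction hp, hq using span_induction₂ with
  | mem_mem p q hp hq =>
    obtain ⟨i, rfl⟩ := hp
    obtain ⟨j, rfl⟩ := hq
    exact hvw i j
  | _ => simp_all [inner_add_left, inner_add_right, inner_smul_left, inner_smul_right]

theorem norm_fst_eq_norm_snd_of_mem_closure_span_pair
    (hvw : ∀ i j, ⟪v i, v j⟫_𝕜 = ⟪w i, w j⟫_𝕜) {p : E × F}
    (hp : p ∈ (span 𝕜 (range fun i ↦ (v i, w i))).topologicalClosure) :
    ‖p.1‖ = ‖p.2‖ := by
  refine closure_minimal (fun q hq ↦ ?_) (isClosed_eq continuous_fst.norm continuous_snd.norm) hp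
  rw [mem_ofPred_eq, @norm_eq_sqrt_re_inner 𝕜, @norm_eq_sqrt_re_inner 𝕜,
    inner_fst_eq_inner_snd_of_mem_span_pair hvw hq hq]

theorem norm_sum_eq_norm_sum_of_inner_eq (hvw : ∀ i j, ⟪v i, v j⟫_𝕜 = ⟪w i, w j⟫_𝕜)
    {κ : Type*} (s : Finset κ) (f : κ → ι) :
    ‖∑ k ∈ s, v (f k)‖ = ‖∑ k ∈ s, w (f k)‖ := by
  have hmem : ∑ k ∈ s, (v (f k), w (f k)) ∈ span 𝕜 (range fun i ↦ (v i, w i)) :=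
    sum_mem fun k _ ↦ subset_span ⟨f k, rfl⟩
  simpa [Prod.fst_sum, Prod.snd_sum] using
    norm_fst_eq_norm_snd_of_mem_closure_span_pair hvw (le_topologicalClosure _ hmem)

variable [CompleteSpace E] [CompleteSpace F]

theorem map_fst_topologicalClosure_span_pair (hvw : ∀ i j, ⟪v i, v j⟫_𝕜 = ⟪w i, w j⟫_𝕜) :
    (span 𝕜 (range fun i ↦ (v i, w i))).topologicalClosure.map (LinearMap.fst 𝕜 E F) =
      (span 𝕜 (range v)).topologicalClosure := by
  rw [← coe_fst, map_topologicalClosure_of_norm_eq _ _ fun p hp ↦ by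
    simp [Prod.norm_def, norm_fst_eq_norm_snd_of_mem_closure_span_pair hvw hp], map_span,
    ← range_comp]
  rfl

theorem map_snd_topologicalClosure_span_pair (hvw : ∀ i j, ⟪v i, v j⟫_𝕜 = ⟪w i, w j⟫_𝕜) :
    (span 𝕜 (range fun i ↦ (v i, w i))).topologicalClosure.map (LinearMap.snd 𝕜 E F) =
      (span 𝕜 (range w)).topologicalClosure := by
  rw [← coe_snd, map_topologicalClosure_of_norm_eq _ _ fun p hp ↦ by
    simp [Prod.norm_def, norm_fst_eq_norm_snd_of_mem_closure_span_pair hvw hp], map_span,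
    ← range_comp]
  rfl

def LinearIsometryEquiv.ofInnerEq (hvw : ∀ i j, ⟪v i, v j⟫_𝕜 = ⟪w i, w j⟫_𝕜) :
    (span 𝕜 (range v)).topologicalClosure ≃ₗᵢ[𝕜] (span 𝕜 (range w)).topologicalClosure :=
  (ofEq _ _ (map_fst_topologicalClosure_span_pair hvw)).symm.trans
    ((graphIsometry _ fun _ ↦ norm_fst_eq_norm_snd_of_mem_closure_span_pair hvw).trans
      (ofEq _ _ (map_snd_topologicalClosure_span_pair hvw)))

theorem LinearIsometryEquiv.ofInnerEq_apply (hvw : ∀ i j, ⟪v i, v j⟫_𝕜 = ⟪w i, w j⟫_𝕜) (i : ι) :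
    (ofInnerEq hvw ⟨v i, le_topologicalClosure _ (subset_span ⟨i, rfl⟩)⟩ : F) = w i := by
  have hi : (v i, w i) ∈ (span 𝕜 (range fun i ↦ (v i, w i))).topologicalClosure :=
    le_topologicalClosure _ (subset_span ⟨i, rfl⟩)
  rw [ofInnerEq, trans_apply, trans_apply, coe_ofEq_apply]
  exact congrArg Subtype.val (graphIsometry_apply _ _ hi)

end GramEq

theorem stmt_9_general
    {A : Type*} [NormedRing A] [NormedAlgebra ℂ A]
    {H K K' : Type*} [NormedAddCommGroup H] [InnerProductSpace ℂ H] [CompleteSpace H]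
    [NormedAddCommGroup K] [InnerProductSpace ℂ K] [CompleteSpace K]
    [NormedAddCommGroup K'] [InnerProductSpace ℂ K'] [CompleteSpace K']
    {X : Type*} (E : X → X → A)
    (Φ : X → H →L[ℂ] K) (Ψ : X → H →L[ℂ] K')
    (φ : A →ₗ[ℂ] (H →L[ℂ] H))
    (hΦ : ∀ x y, adjoint (Φ x) ∘L Φ y = φ (E x y))
    (hΨ : ∀ x y, adjoint (Ψ x) ∘L Ψ y = φ (E x y)) :
    (∀ (n : ℕ) (xs : Fin n → X) (hs : Fin n → H),
        ‖∑ i, Φ (xs i) (hs i)‖ = ‖∑ i, Ψ (xs i) (hs i)‖) ∧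
      ∃! U : ((Submodule.span ℂ {k : K | ∃ x h, k = Φ x h}).topologicalClosure ≃ₗᵢ[ℂ]
          (Submodule.span ℂ {k : K' | ∃ x h, k = Ψ x h}).topologicalClosure),
        ∀ x h,
          (U ⟨Φ x h,
              Submodule.le_topologicalClosure _
                (Submodule.subset_span ⟨x, h, rfl⟩)⟩ : K') = Ψ x h := by
  let v : X × H → K := fun p ↦ Φ p.1 p.2
  let w : X × H → K' := fun p ↦ Ψ p.1 p.2
  have hvw : ∀ p q, ⟪v p, v q⟫_ℂ = ⟪w p, w q⟫_ℂ := fun p q ↦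
    inner_apply_eq_of_adjoint_comp_eq ((hΦ p.1 q.1).trans (hΨ p.1 q.1).symm) p.2 q.2
  have hv : span ℂ {k | ∃ x h, k = Φ x h} = span ℂ (range v) := by
    congr 1
    ext
    simp [v, eq_comm]
  have hw : span ℂ {k | ∃ x h, k = Ψ x h} = span ℂ (range w) := by
    congr 1
    ext
    simp [w, eq_comm]
  refine ⟨fun n xs hs ↦ norm_sum_eq_norm_sum_of_inner_eq hvw Finset.univ fun i ↦ (xs i, hs i), ?_⟩
  let U₀ := (LinearIsometryEquiv.ofEq _ _ (congrArg topologicalClosure hv)).trans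
    ((LinearIsometryEquiv.ofInnerEq hvw).trans
      (LinearIsometryEquiv.ofEq _ _ (congrArg topologicalClosure hw.symm)))
  have hU₀ : ∀ x h, (U₀ ⟨Φ x h, le_topologicalClosure _ (subset_span ⟨x, h, rfl⟩)⟩ : K') = Ψ x h :=
    fun x h ↦ LinearIsometryEquiv.ofInnerEq_apply hvw (x, h)
  refine ⟨U₀, hU₀, fun U hU ↦ LinearIsometryEquiv.ext fun m ↦ ?_⟩
  refine DFunLike.congr_fun (ext_on_topologicalClosure_span
    (f := U.toContinuousLinearEquiv.toContinuousLinearMap)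
    (g := U₀.toContinuousLinearEquiv.toContinuousLinearMap) ?_) m
  rintro _ ⟨x, h, rfl⟩
  exact Subtype.ext ((hU x h).trans (hU₀ x h).symm)

/-- two completely positive maps `Φ`, `Ψ` on a full Hilbert `A`-module
with the same underlying completely positive map `φ` satisfy
`‖Σ Φ(xᵢ)hᵢ‖ = ‖Σ Ψ(xᵢ)hᵢ‖`, and there is a unique unitary
`U : [Φ(X)H] → [Ψ(X)H]` with `U(Φ(x)h) = Ψ(x)h`. -/
theorem stmt_9
    {A : Type*} [NormedRing A] [StarRing A] [CStarRing A] [NormedAlgebra ℂ A]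
    [CompleteSpace A] [StarModule ℂ A]
    {H K K' : Type*} [NormedAddCommGroup H] [InnerProductSpace ℂ H] [CompleteSpace H]
    [NormedAddCommGroup K] [InnerProductSpace ℂ K] [CompleteSpace K]
    [NormedAddCommGroup K'] [InnerProductSpace ℂ K'] [CompleteSpace K']
    {X : Type*} (E : X → X → A)
    (hfull : (Submodule.span ℂ {a : A | ∃ x y, a = E x y}).topologicalClosure = ⊤)
    (Φ : X → H →L[ℂ] K) (Ψ : X → H →L[ℂ] K')
    (φ : A →ₗ[ℂ] (H →L[ℂ] H)) (hcp : IsCPMap φ)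
    (hΦ : ∀ x y, adjoint (Φ x) ∘L Φ y = φ (E x y))
    (hΨ : ∀ x y, adjoint (Ψ x) ∘L Ψ y = φ (E x y)) :
    (∀ (n : ℕ) (xs : Fin n → X) (hs : Fin n → H),
        ‖∑ i, Φ (xs i) (hs i)‖ = ‖∑ i, Ψ (xs i) (hs i)‖) ∧
      ∃! U : ((Submodule.span ℂ {k : K | ∃ x h, k = Φ x h}).topologicalClosure ≃ₗᵢ[ℂ]
          (Submodule.span ℂ {k : K' | ∃ x h, k = Ψ x h}).topologicalClosure),
        ∀ x h,
          (U ⟨Φ x h,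
              Submodule.le_topologicalClosure _
                (Submodule.subset_span ⟨x, h, rfl⟩)⟩ : K') = Ψ x h :=
  stmt_9_general E Φ Ψ φ hΦ hΨ
end
end

section
/- Let Φ : X → L(H,K) be a completely positive map on a full Hilbert A-module X with underlying completely positive map φ, and let (π_φ, H_φ, V_φ) be the Stinespring dilation of φ (so φ(a) = V_φ* π_φ(a) V_φ and [π_φ(A)V_φ H] = H_φ). Then the formula π_Φ(x)(Σᵢ π_φ(aᵢ)V_φ hᵢ) = Σᵢ Φ(x aᵢ) hᵢ gives a well-defined bounded operator π_Φ(x) : H_φ → K_Φ := [Φ(X)H] for each x ∈ X, and π_Φ(x)* π_Φ(y) = π_φ(⟨x,y⟩) for all x,y ∈ X, i.e., π_Φ is a representation of X on H_φ and K_Φ. -/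
noncomputable section

open ContinuousLinearMap

/-! The identity `⟪Φ (x a) h, Φ (y b) k⟫ = ⟪π a (V h), π ⟨x, y⟩ (π b (V k))⟫` extends
sesquilinearly to finite sums. For `x = y` it gives
`‖∑ Φ (x aᵢ) hᵢ‖² ≤ ‖π ⟨x, x⟩‖ ‖∑ π aᵢ (V hᵢ)‖²`, so `π_Φ x` is well defined and bounded on the
dense subspace spanned by the `π a (V h)` and extends by continuity; the identity
`π_Φ(x)* π_Φ(y) = π ⟨x, y⟩` and the range condition pass to the closure. -/

section HilbertModule

variable {A X : Type*} {E : X → X → A} {act : X → A → X}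

theorem inner_act_act [Semigroup A] [StarMul A]
    (hE_star : ∀ x y, star (E x y) = E y x) (hE_act : ∀ x y a, E x (act y a) = E x y * a)
    (x y : X) (a b : A) : E (act x a) (act y b) = star a * (E x y * b) := by
  rw [← hE_star, hE_act, star_mul, hE_star, hE_act]

variable {H K Hπ : Type*} [Ring A] [StarRing A] [Algebra ℂ A]
  [NormedAddCommGroup H] [InnerProductSpace ℂ H] [CompleteSpace H]
  [NormedAddCommGroup K] [InnerProductSpace ℂ K] [CompleteSpace K]
  [NormedAddCommGroup Hπ] [InnerProductSpace ℂ Hπ] [CompleteSpace Hπ]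

theorem inner_apply_act_apply_act
    (hE_star : ∀ x y, star (E x y) = E y x) (hE_act : ∀ x y a, E x (act y a) = E x y * a)
    {Φ : X → H →L[ℂ] K} {π : A →⋆ₐ[ℂ] (Hπ →L[ℂ] Hπ)} {V : H →L[ℂ] Hπ}
    (hΦ : ∀ x y, adjoint (Φ x) ∘L Φ y = adjoint V ∘L π (E x y) ∘L V)
    (x y : X) (a b : A) (h k : H) :
    inner ℂ (Φ (act x a) h) (Φ (act y b) k) = inner ℂ (π a (V h)) (π (E x y) (π b (V k))) := by
  rw [← adjoint_inner_right, ← comp_apply, hΦ, inner_act_act hE_star hE_act, map_mul,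
    map_mul, map_star, star_eq_adjoint]
  simp only [mul_def, comp_apply, adjoint_inner_right]

end HilbertModule

section InnerProductSpace

variable {𝕜 W U : Type*} [RCLike 𝕜]
  [NormedAddCommGroup W] [InnerProductSpace 𝕜 W] [NormedAddCommGroup U] [InnerProductSpace 𝕜 U]

theorem inner_linearCombination_eq_of_inner_eq {ι : Type*} {u u' : ι → U} {v : ι → W}
    {B : W →ₗ[𝕜] W} (h : ∀ i j, inner 𝕜 (u i) (u' j) = inner 𝕜 (v i) (B (v j)))
    (f g : ι →₀ 𝕜) :
    inner 𝕜 (Finsupp.linearCombination 𝕜 u f) (Finsupp.linearCombination 𝕜 u' g)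
      = inner 𝕜 (Finsupp.linearCombination 𝕜 v f) (B (Finsupp.linearCombination 𝕜 v g)) := by
  simp only [Finsupp.linearCombination_apply, map_finsuppSum, map_smul, Finsupp.sum_inner,
    Finsupp.inner_sum, inner_smul_left, inner_smul_right, h]

theorem norm_le_sqrt_opNorm_mul_of_inner_self_eq {u : U} {w : W} {B : W →L[𝕜] W}
    (h : inner 𝕜 u u = inner 𝕜 w (B w)) : ‖u‖ ≤ √‖B‖ * ‖w‖ := by
  have hsq : ‖u‖ ^ 2 ≤ ‖B‖ * ‖w‖ ^ 2 :=
    calc ‖u‖ ^ 2 = ‖inner 𝕜 w (B w)‖ := by rw [← h, inner_self_eq_norm_sq_to_K]; simp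
      _ ≤ ‖w‖ * (‖B‖ * ‖w‖) := (norm_inner_le_norm _ _).trans (by gcongr; exact B.le_opNorm w)
      _ = ‖B‖ * ‖w‖ ^ 2 := by ring
  rwa [← pow_le_pow_iff_left₀ (norm_nonneg _) (by positivity) two_ne_zero, mul_pow,
    Real.sq_sqrt (norm_nonneg _)]

variable {V : Type*} [AddCommGroup V] [Module 𝕜 V] {L : V →ₗ[𝕜] W}

theorem apply_mem_topologicalClosure_range_of_denseRange (hL : DenseRange L) {M : V →ₗ[𝕜] U}
    {T : W →L[𝕜] U} (hT : ∀ v, T (L v) = M v) (w : W) :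
    T w ∈ (LinearMap.range M).topologicalClosure :=
  hL.induction_on w ((LinearMap.range M).isClosed_topologicalClosure.preimage T.continuous)
    fun v => (LinearMap.range M).le_topologicalClosure (hT v ▸ LinearMap.mem_range_self M v)

theorem adjoint_comp_eq_of_inner_eq_of_denseRange [CompleteSpace W] [CompleteSpace U]
    (hL : DenseRange L) {T T' : W →L[𝕜] U} {B : W →L[𝕜] W}
    (h : ∀ f g, inner 𝕜 (T (L f)) (T' (L g)) = inner 𝕜 (L f) (B (L g))) :
    adjoint T ∘L T' = B := by
  have hinner : ∀ w w', inner 𝕜 (T w) (T' w') = inner 𝕜 w (B w') :=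
    hL.induction_on₂ (isClosed_eq (by fun_prop) (by fun_prop)) h
  ext w'
  exact ext_inner_left 𝕜 fun w => by rw [comp_apply, adjoint_inner_right, hinner]

end InnerProductSpace

theorem stmt_10_general
    {A : Type*} [NormedRing A] [StarRing A] [NormedAlgebra ℂ A]
    {H K Hφ : Type*} [NormedAddCommGroup H] [InnerProductSpace ℂ H] [CompleteSpace H]
    [NormedAddCommGroup K] [InnerProductSpace ℂ K] [CompleteSpace K]
    [NormedAddCommGroup Hφ] [InnerProductSpace ℂ Hφ] [CompleteSpace Hφ]
    {X : Type*} (E : X → X → A) (act : X → A → X)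
    (hE_star : ∀ x y, star (E x y) = E y x)
    (hE_act : ∀ x y a, E x (act y a) = E x y * a)
    (Φ : X → H →L[ℂ] K) (φ : A →ₗ[ℂ] (H →L[ℂ] H))
    (hΦ : ∀ x y, adjoint (Φ x) ∘L Φ y = φ (E x y))
    (πφ : A →⋆ₐ[ℂ] (Hφ →L[ℂ] Hφ)) (Vφ : H →L[ℂ] Hφ)
    (hSt : ∀ a, φ a = adjoint Vφ ∘L πφ a ∘L Vφ)
    (hmin : (Submodule.span ℂ {ξ : Hφ | ∃ a h, ξ = πφ a (Vφ h)}).topologicalClosure = ⊤) :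
    ∃ πΦ : X → Hφ →L[ℂ] K,
      (∀ (x : X) (n : ℕ) (a : Fin n → A) (h : Fin n → H),
          πΦ x (∑ i, πφ (a i) (Vφ (h i))) = ∑ i, Φ (act x (a i)) (h i)) ∧
        (∀ (x : X) (ξ : Hφ),
          πΦ x ξ ∈ (Submodule.span ℂ {k : K | ∃ y h, k = Φ y h}).topologicalClosure) ∧
        ∀ x y, adjoint (πΦ x) ∘L πΦ y = πφ (E x y) := by
  set L := Finsupp.linearCombination ℂ fun p : A × H => πφ p.1 (Vφ p.2)
  set M := fun x => Finsupp.linearCombination ℂ fun p : A × H => Φ (act x p.1) p.2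
  have hL : DenseRange L := by
    have hgen : Set.range (fun p : A × H => πφ p.1 (Vφ p.2)) = {ξ | ∃ a h, ξ = πφ a (Vφ h)} := by
      ext; simp [eq_comm]
    refine (Submodule.dense_iff_topologicalClosure_eq_top (s := LinearMap.range L)).2 ?_
    rwa [Finsupp.range_linearCombination, hgen]
  have hM : ∀ x y f g, inner ℂ (M x f) (M y g) = inner ℂ (L f) (πφ (E x y) (L g)) :=
    fun x y => inner_linearCombination_eq_of_inner_eq fun _ _ =>
      inner_apply_act_apply_act hE_star hE_act (fun x y => (hΦ x y).trans (hSt _)) x y _ _ _ _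
  have hext : ∀ x f, (M x).extendOfNorm L (L f) = M x f := fun x =>
    LinearMap.extendOfNorm_eq hL ⟨_, fun f => norm_le_sqrt_opNorm_mul_of_inner_self_eq (hM x x f f)⟩
  refine ⟨fun x => (M x).extendOfNorm L, fun x n a h => ?_, fun x ξ => ?_, fun x y => ?_⟩
  · simpa [L, M] using hext x (∑ i, Finsupp.single (a i, h i) 1)
  · refine Submodule.topologicalClosure_mono ?_
      (apply_mem_topologicalClosure_range_of_denseRange hL (hext x) ξ)
    rw [Finsupp.range_linearCombination]
    exact Submodule.span_mono (by rintro _ ⟨p, rfl⟩; exact ⟨_, _, rfl⟩)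
  · exact adjoint_comp_eq_of_inner_eq_of_denseRange hL fun f g => by rw [hext, hext, hM]

/-- given a completely positive map `Φ` on a full Hilbert `A`-module
`X` with underlying map `φ` and the minimal Stinespring dilation `(π_φ, H_φ, V_φ)`
of `φ`, the formula `π_Φ(x)(Σ π_φ(aᵢ)V_φ hᵢ) = Σ Φ(x aᵢ)hᵢ` defines a bounded
operator `π_Φ(x) : H_φ → K_Φ = [Φ(X)H]` and `π_Φ(x)*π_Φ(y) = π_φ(⟨x,y⟩)`, i.e.
`π_Φ` is a representation of `X`. -/
theorem stmt_10
    {A : Type*} [NormedRing A] [StarRing A] [CStarRing A] [NormedAlgebra ℂ A]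
    [CompleteSpace A] [StarModule ℂ A]
    {H K Hφ : Type*} [NormedAddCommGroup H] [InnerProductSpace ℂ H] [CompleteSpace H]
    [NormedAddCommGroup K] [InnerProductSpace ℂ K] [CompleteSpace K]
    [NormedAddCommGroup Hφ] [InnerProductSpace ℂ Hφ] [CompleteSpace Hφ]
    {X : Type*} (E : X → X → A) (act : X → A → X)
    (hfull : (Submodule.span ℂ {a : A | ∃ x y, a = E x y}).topologicalClosure = ⊤)
    (hE_star : ∀ x y, star (E x y) = E y x)
    (hE_act : ∀ x y a, E x (act y a) = E x y * a)
    (Φ : X → H →L[ℂ] K) (φ : A →ₗ[ℂ] (H →L[ℂ] H)) (hcp : IsCPMap φ)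
    (hΦ : ∀ x y, adjoint (Φ x) ∘L Φ y = φ (E x y))
    (πφ : A →⋆ₐ[ℂ] (Hφ →L[ℂ] Hφ)) (Vφ : H →L[ℂ] Hφ)
    (hSt : ∀ a, φ a = adjoint Vφ ∘L πφ a ∘L Vφ)
    (hmin : (Submodule.span ℂ {ξ : Hφ | ∃ a h, ξ = πφ a (Vφ h)}).topologicalClosure = ⊤) :
    ∃ πΦ : X → Hφ →L[ℂ] K,
      (∀ (x : X) (n : ℕ) (a : Fin n → A) (h : Fin n → H),
          πΦ x (∑ i, πφ (a i) (Vφ (h i))) = ∑ i, Φ (act x (a i)) (h i)) ∧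
        (∀ (x : X) (ξ : Hφ),
          πΦ x ξ ∈ (Submodule.span ℂ {k : K | ∃ y h, k = Φ y h}).topologicalClosure) ∧
        ∀ x y, adjoint (πΦ x) ∘L πΦ y = πφ (E x y) :=
  stmt_10_general E act hE_star hE_act Φ φ hΦ πφ Vφ hSt hmin
end
end

section
/- Uniqueness of the Stinespring construction for Hilbert modules: Let Φ : X → L(H,K) be a completely positive map on a full Hilbert A-module X, and suppose (π_i, H_i, K_i, V_i, W_i) for i = 1,2 are two tuples where π_i : X → L(H_i,K_i) is a representation of X, V_i ∈ L(H,H_i), W_i : K → K_i is a coisometry, Φ(x) = W_i* π_i(x) V_i for all x, [π_i(X)V_i H] = K_i, and [π_i(X)* W_i K] = H_i. Then there exist unitaries U₁ : H₁ → H₂ and U₂ : K₁ → K₂ with U₂ π₁(x) = π₂(x) U₁ for all x ∈ X, V₂ = U₁ V₁, and W₂ = U₂ W₁. -/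
/-!
The compressions `a ↦ Vᵢ* ρᵢ(a) Vᵢ` agree on every `⟨x, y⟩`, where both equal `Φ(x)* Φ(y)`
because `Wᵢ` is a coisometry; by continuity of `ρᵢ` and fullness of `X` they agree on all of `A`.
Hence the vectors `πᵢ(x) ρᵢ(a) Vᵢ h` have the same Gram matrix for `i = 1, 2`, and as they span
`Kᵢ` densely this yields the unitary `U₂`. Testing against these vectors gives `U₂ W₁ = W₂` and
`U₂ π₁(x) π₁(y)* = π₂(x) π₂(y)* U₂`; together these make the Gram matrices of the vectors
`πᵢ(x)* Wᵢ k` agree, which yields `U₁`. The remaining identities are checked on spanning sets.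
-/

noncomputable section

open ContinuousLinearMap

open scoped InnerProductSpace

section Hilbert

variable {𝕜 E F ι : Type*} [RCLike 𝕜]
  [NormedAddCommGroup E] [InnerProductSpace 𝕜 E] [NormedAddCommGroup F] [InnerProductSpace 𝕜 F]

theorem norm_linearCombination_eq_of_inner_eq {g₁ : ι → E} {g₂ : ι → F}
    (hg : ∀ i j, ⟪g₁ i, g₁ j⟫_𝕜 = ⟪g₂ i, g₂ j⟫_𝕜) (c : ι →₀ 𝕜) :
    ‖Finsupp.linearCombination 𝕜 g₁ c‖ = ‖Finsupp.linearCombination 𝕜 g₂ c‖ := by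
  have h : ⟪Finsupp.linearCombination 𝕜 g₁ c, Finsupp.linearCombination 𝕜 g₁ c⟫_𝕜 =
      ⟪Finsupp.linearCombination 𝕜 g₂ c, Finsupp.linearCombination 𝕜 g₂ c⟫_𝕜 := by
    simp only [Finsupp.linearCombination_apply, Finsupp.sum, inner_sum, sum_inner,
      inner_smul_left, inner_smul_right, hg]
  rw [inner_self_eq_norm_sq_to_K, inner_self_eq_norm_sq_to_K] at h
  exact (sq_eq_sq₀ (norm_nonneg _) (norm_nonneg _)).1 (by exact_mod_cast h)

theorem denseRange_linearCombination {g : ι → E}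
    (hg : Dense (Submodule.span 𝕜 (Set.range g) : Set E)) :
    DenseRange (Finsupp.linearCombination 𝕜 g) := by
  rwa [DenseRange, ← LinearMap.coe_range, Finsupp.range_linearCombination]

theorem exists_linearIsometryEquiv_of_inner_eq [CompleteSpace E] [CompleteSpace F]
    {g₁ : ι → E} {g₂ : ι → F} (hg : ∀ i j, ⟪g₁ i, g₁ j⟫_𝕜 = ⟪g₂ i, g₂ j⟫_𝕜)
    (h₁ : Dense (Submodule.span 𝕜 (Set.range g₁) : Set E))
    (h₂ : Dense (Submodule.span 𝕜 (Set.range g₂) : Set F)) :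
    ∃ U : E ≃ₗᵢ[𝕜] F, ∀ i, U (g₁ i) = g₂ i := by
  have hnorm (c : ι →₀ 𝕜) := (norm_linearCombination_eq_of_inner_eq hg c).symm
  refine ⟨(LinearEquiv.refl 𝕜 (ι →₀ 𝕜)).extendOfIsometry _ _ (denseRange_linearCombination h₁)
    (denseRange_linearCombination h₂) hnorm, fun i => ?_⟩
  simpa using LinearEquiv.extendOfIsometry_eq (LinearEquiv.refl 𝕜 (ι →₀ 𝕜)) _ _
    (denseRange_linearCombination h₁) (denseRange_linearCombination h₂) hnorm (Finsupp.single i 1)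

theorem LinearIsometryEquiv.apply_eq_of_inner_eq (U : E ≃ₗᵢ[𝕜] F) {g₁ : ι → E} {g₂ : ι → F}
    (hU : ∀ i, U (g₁ i) = g₂ i) (h₂ : Dense (Submodule.span 𝕜 (Set.range g₂) : Set F))
    {u : E} {v : F} (h : ∀ i, ⟪u, g₁ i⟫_𝕜 = ⟪v, g₂ i⟫_𝕜) : U u = v := by
  refine ext_inner_right 𝕜 fun w => ?_
  have := ContinuousLinearMap.ext_on (f := innerSL 𝕜 (U u)) (g := innerSL 𝕜 v) h₂ ?_
  · exact congrArg (fun T => T w) this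
  rintro _ ⟨i, rfl⟩
  simp [← hU, h]

theorem dense_span_range_of_topologicalClosure_eq_top {α β : Type*} {f : α → β → E}
    (h : (Submodule.span 𝕜 {v | ∃ a b, v = f a b}).topologicalClosure = ⊤) :
    Dense (Submodule.span 𝕜 (Set.range fun p : α × β => f p.1 p.2) : Set E) := by
  rw [Submodule.dense_iff_topologicalClosure_eq_top, ← h]
  congr 3
  ext v
  simp [eq_comm]

end Hilbert

section Representation

variable {A : Type*} [Semiring A] [StarRing A] [Algebra ℂ A] {H K H' K' X : Type*}
  [NormedAddCommGroup H] [InnerProductSpace ℂ H] [NormedAddCommGroup K] [InnerProductSpace ℂ K]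
  [NormedAddCommGroup H'] [InnerProductSpace ℂ H'] [CompleteSpace H']
  [NormedAddCommGroup K'] [InnerProductSpace ℂ K'] [CompleteSpace K']

def IsRepresentation (E : X → X → A) (π : X → H' →L[ℂ] K') (ρ : A →⋆ₐ[ℂ] (H' →L[ℂ] H')) :
    Prop :=
  ∀ x y, adjoint (π x) ∘L π y = ρ (E x y)

def compression [CompleteSpace H] (ρ : A →⋆ₐ[ℂ] (H' →L[ℂ] H')) (V : H →L[ℂ] H') :
    A →ₗ[ℂ] (H →L[ℂ] H) where
  toFun a := adjoint V ∘L ρ a ∘L V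
  map_add' a b := by simp only [map_add, add_comp, comp_add]
  map_smul' c a := by simp only [map_smul, smul_comp, comp_smul, RingHom.id_apply]

@[simp]
theorem compression_apply [CompleteSpace H] (ρ : A →⋆ₐ[ℂ] (H' →L[ℂ] H')) (V : H →L[ℂ] H')
    (a : A) : compression ρ V a = adjoint V ∘L ρ a ∘L V := rfl

namespace IsRepresentation

variable {E : X → X → A} {π : X → H' →L[ℂ] K'} {ρ : A →⋆ₐ[ℂ] (H' →L[ℂ] H')}

theorem adjoint_apply_apply (hπ : IsRepresentation E π ρ) (x y : X) (v : H') :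
    adjoint (π x) (π y v) = ρ (E x y) v := by
  rw [← hπ]; rfl

theorem inner_apply_rho_apply [CompleteSpace H] (hπ : IsRepresentation E π ρ) (V : H →L[ℂ] H')
    (a : A) (x y : X) (h h' : H) :
    ⟪π x (ρ a (V h)), π y (V h')⟫_ℂ = ⟪h, compression ρ V (star a * E x y) h'⟫_ℂ := by
  rw [← adjoint_inner_right, hπ.adjoint_apply_apply, ← adjoint_inner_right, ← star_eq_adjoint,
    ← map_star]
  simp [mul_apply_eq_comp, adjoint_inner_right]

theorem inner_apply_apply [CompleteSpace H] (hπ : IsRepresentation E π ρ) (V : H →L[ℂ] H')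
    (x y : X) (h h' : H) : ⟪π x (V h), π y (V h')⟫_ℂ = ⟪h, compression ρ V (E x y) h'⟫_ℂ := by
  simpa using hπ.inner_apply_rho_apply V 1 x y h h'

theorem compression_apply_eq [CompleteSpace H] [CompleteSpace K] (hπ : IsRepresentation E π ρ)
    {Φ : X → H →L[ℂ] K} {V : H →L[ℂ] H'} {W : K →L[ℂ] K'} (hW : W ∘L adjoint W = 1)
    (hΦ : ∀ x, Φ x = adjoint W ∘L π x ∘L V) (x y : X) :
    compression ρ V (E x y) = adjoint (Φ x) ∘L Φ y := by
  rw [compression_apply, ← hπ, hΦ, hΦ]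
  simp only [adjoint_comp, adjoint_adjoint, comp_assoc]
  rw [← comp_assoc W, hW, one_def, id_comp]

end IsRepresentation

end Representation

section Dilation

variable {H K H' K' X : Type*}
  [NormedAddCommGroup H] [InnerProductSpace ℂ H] [NormedAddCommGroup K] [InnerProductSpace ℂ K]
  [CompleteSpace K] [NormedAddCommGroup H'] [InnerProductSpace ℂ H']
  [NormedAddCommGroup K'] [InnerProductSpace ℂ K'] [CompleteSpace K']
  {Φ : X → H →L[ℂ] K} {π : X → H' →L[ℂ] K'} {V : H →L[ℂ] H'} {W : K →L[ℂ] K'}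

theorem inner_apply_apply_of_eq_adjoint_comp (hΦ : ∀ x, Φ x = adjoint W ∘L π x ∘L V)
    (k : K) (x : X) (h : H) : ⟪W k, π x (V h)⟫_ℂ = ⟪k, Φ x h⟫_ℂ := by
  rw [hΦ, comp_apply, adjoint_inner_right, comp_apply]

theorem inner_adjoint_apply_of_eq_adjoint_comp [CompleteSpace H']
    (hΦ : ∀ x, Φ x = adjoint W ∘L π x ∘L V) (h : H) (x : X) (k : K) :
    ⟪V h, adjoint (π x) (W k)⟫_ℂ = ⟪Φ x h, k⟫_ℂ := by
  rw [adjoint_inner_right, hΦ, comp_apply, adjoint_inner_left, comp_apply]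

end Dilation

theorem StarAlgHom.continuous_of_cStarRing {A B : Type*} [NormedRing A] [StarRing A]
    [CStarRing A] [NormedAlgebra ℂ A] [CompleteSpace A] [StarModule ℂ A] [CStarAlgebra B]
    (ρ : A →⋆ₐ[ℂ] B) : Continuous ρ := by
  let _ : CStarAlgebra A := {}
  exact AddMonoidHomClass.continuous_of_bound ρ 1
    (by simpa using NonUnitalStarAlgHom.norm_apply_le ρ)

section Compression

variable {A : Type*} [NormedRing A] [StarRing A] [CStarRing A] [NormedAlgebra ℂ A]
  [CompleteSpace A] [StarModule ℂ A] {H H₁ H₂ : Type*}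
  [NormedAddCommGroup H] [InnerProductSpace ℂ H] [CompleteSpace H]
  [NormedAddCommGroup H₁] [InnerProductSpace ℂ H₁] [CompleteSpace H₁]
  [NormedAddCommGroup H₂] [InnerProductSpace ℂ H₂] [CompleteSpace H₂]

theorem continuous_compression (ρ : A →⋆ₐ[ℂ] (H₁ →L[ℂ] H₁)) (V : H →L[ℂ] H₁) :
    Continuous (compression ρ V) :=
  continuous_const.clm_comp (ρ.continuous_of_cStarRing.clm_comp continuous_const)

theorem compression_eq_of_eqOn {ρ₁ : A →⋆ₐ[ℂ] (H₁ →L[ℂ] H₁)} {ρ₂ : A →⋆ₐ[ℂ] (H₂ →L[ℂ] H₂)}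
    {V₁ : H →L[ℂ] H₁} {V₂ : H →L[ℂ] H₂} {s : Set A} (hs : Dense (Submodule.span ℂ s : Set A))
    (h : Set.EqOn (compression ρ₁ V₁) (compression ρ₂ V₂) s) :
    compression ρ₁ V₁ = compression ρ₂ V₂ :=
  congrArg ContinuousLinearMap.toLinearMap <|
    ContinuousLinearMap.ext_on (f := ⟨_, continuous_compression ρ₁ V₁⟩)
      (g := ⟨_, continuous_compression ρ₂ V₂⟩) hs h

end Compression

section Uniqueness

variable {A : Type*} [Semiring A] [StarRing A] [Algebra ℂ A] {H K H₁ K₁ H₂ K₂ X : Type*}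
  [NormedAddCommGroup H] [InnerProductSpace ℂ H] [NormedAddCommGroup K] [InnerProductSpace ℂ K]
  [NormedAddCommGroup H₁] [InnerProductSpace ℂ H₁] [CompleteSpace H₁]
  [NormedAddCommGroup K₁] [InnerProductSpace ℂ K₁] [CompleteSpace K₁]
  [NormedAddCommGroup H₂] [InnerProductSpace ℂ H₂] [CompleteSpace H₂]
  [NormedAddCommGroup K₂] [InnerProductSpace ℂ K₂] [CompleteSpace K₂]
  {E : X → X → A}
  {π₁ : X → H₁ →L[ℂ] K₁} {ρ₁ : A →⋆ₐ[ℂ] (H₁ →L[ℂ] H₁)} {V₁ : H →L[ℂ] H₁} {W₁ : K →L[ℂ] K₁}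
  {π₂ : X → H₂ →L[ℂ] K₂} {ρ₂ : A →⋆ₐ[ℂ] (H₂ →L[ℂ] H₂)} {V₂ : H →L[ℂ] H₂} {W₂ : K →L[ℂ] K₂}

theorem exists_linearIsometryEquiv_apply_rho_apply [CompleteSpace H]
    (hπ₁ : IsRepresentation E π₁ ρ₁) (hπ₂ : IsRepresentation E π₂ ρ₂)
    (hφ : compression ρ₁ V₁ = compression ρ₂ V₂)
    (hd₁ : Dense (Submodule.span ℂ (Set.range fun p : X × H => π₁ p.1 (V₁ p.2)) : Set K₁))
    (hd₂ : Dense (Submodule.span ℂ (Set.range fun p : X × H => π₂ p.1 (V₂ p.2)) : Set K₂)) :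
    ∃ U : K₁ ≃ₗᵢ[ℂ] K₂, ∀ a x h, U (π₁ x (ρ₁ a (V₁ h))) = π₂ x (ρ₂ a (V₂ h)) := by
  obtain ⟨U, hU⟩ := exists_linearIsometryEquiv_of_inner_eq (fun p q => by
    rw [hπ₁.inner_apply_apply, hπ₂.inner_apply_apply, hφ]) hd₁ hd₂
  refine ⟨U, fun a x h => U.apply_eq_of_inner_eq hU hd₂ fun p => ?_⟩
  rw [hπ₁.inner_apply_rho_apply, hπ₂.inner_apply_rho_apply, hφ]

theorem apply_apply_adjoint_eq_of_apply_rho_apply_eq (U : K₁ ≃ₗᵢ[ℂ] K₂)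
    (hπ₁ : IsRepresentation E π₁ ρ₁) (hπ₂ : IsRepresentation E π₂ ρ₂)
    (hU : ∀ a x h, U (π₁ x (ρ₁ a (V₁ h))) = π₂ x (ρ₂ a (V₂ h)))
    (hd₁ : Dense (Submodule.span ℂ (Set.range fun p : X × H => π₁ p.1 (V₁ p.2)) : Set K₁))
    (x y : X) (w : K₁) : U (π₁ x (adjoint (π₁ y) w)) = π₂ x (adjoint (π₂ y) (U w)) := by
  have hops : (U : K₁ →L[ℂ] K₂) ∘L π₁ x ∘L adjoint (π₁ y) =
      π₂ x ∘L adjoint (π₂ y) ∘L (U : K₁ →L[ℂ] K₂) := by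
    refine ContinuousLinearMap.ext_on hd₁ ?_
    rintro _ ⟨⟨z, h⟩, rfl⟩
    have hU₁ : U (π₁ z (V₁ h)) = π₂ z (V₂ h) := by simpa using hU 1 z h
    simp [hπ₁.adjoint_apply_apply, hπ₂.adjoint_apply_apply, hU, hU₁]
  exact congrArg (fun T => T w) hops

theorem inner_adjoint_apply_adjoint_apply_eq [CompleteSpace K] (U : K₁ ≃ₗᵢ[ℂ] K₂)
    (hUπ : ∀ x y w, U (π₁ x (adjoint (π₁ y) w)) = π₂ x (adjoint (π₂ y) (U w)))
    (hUW : ∀ k, U (W₁ k) = W₂ k) (x y : X) (k k' : K) :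
    ⟪adjoint (π₁ x) (W₁ k), adjoint (π₁ y) (W₁ k')⟫_ℂ =
      ⟪adjoint (π₂ x) (W₂ k), adjoint (π₂ y) (W₂ k')⟫_ℂ := by
  rw [adjoint_inner_left, adjoint_inner_left, ← U.inner_map_map, hUπ, hUW, hUW]

theorem apply_eq_apply_apply_of_apply_adjoint_apply_eq [CompleteSpace K]
    (U₁ : H₁ ≃ₗᵢ[ℂ] H₂) (U₂ : K₁ ≃ₗᵢ[ℂ] K₂)
    (hU₂π : ∀ x y w, U₂ (π₁ x (adjoint (π₁ y) w)) = π₂ x (adjoint (π₂ y) (U₂ w)))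
    (hU₂W : ∀ k, U₂ (W₁ k) = W₂ k)
    (hU₁ : ∀ p : X × K, U₁ (adjoint (π₁ p.1) (W₁ p.2)) = adjoint (π₂ p.1) (W₂ p.2))
    (he₁ : Dense (Submodule.span ℂ (Set.range fun p : X × K => adjoint (π₁ p.1) (W₁ p.2)) :
      Set H₁))
    (x : X) (h : H₁) : U₂ (π₁ x h) = π₂ x (U₁ h) := by
  have hops : (U₂ : K₁ →L[ℂ] K₂) ∘L π₁ x = π₂ x ∘L (U₁ : H₁ →L[ℂ] H₂) := by
    refine ContinuousLinearMap.ext_on he₁ ?_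
    rintro _ ⟨⟨y, k⟩, rfl⟩
    simp [hU₂π, hU₂W, hU₁ (y, k)]
  exact congrArg (fun T => T h) hops

end Uniqueness

/-- uniqueness, up to unitary equivalence, of the minimal Stinespring
construction for a completely positive map `Φ` on a full Hilbert `A`-module. -/
theorem stmt_12
    {A : Type*} [NormedRing A] [StarRing A] [CStarRing A] [NormedAlgebra ℂ A]
    [CompleteSpace A] [StarModule ℂ A]
    {H K H₁ K₁ H₂ K₂ : Type*}
    [NormedAddCommGroup H] [InnerProductSpace ℂ H] [CompleteSpace H]
    [NormedAddCommGroup K] [InnerProductSpace ℂ K] [CompleteSpace K]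
    [NormedAddCommGroup H₁] [InnerProductSpace ℂ H₁] [CompleteSpace H₁]
    [NormedAddCommGroup K₁] [InnerProductSpace ℂ K₁] [CompleteSpace K₁]
    [NormedAddCommGroup H₂] [InnerProductSpace ℂ H₂] [CompleteSpace H₂]
    [NormedAddCommGroup K₂] [InnerProductSpace ℂ K₂] [CompleteSpace K₂]
    {X : Type*} (E : X → X → A)
    (hfull : (Submodule.span ℂ {a : A | ∃ x y, a = E x y}).topologicalClosure = ⊤)
    (Φ : X → H →L[ℂ] K)
    (π₁ : X → H₁ →L[ℂ] K₁) (ρ₁ : A →⋆ₐ[ℂ] (H₁ →L[ℂ] H₁))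
    (hrep₁ : ∀ x y, adjoint (π₁ x) ∘L π₁ y = ρ₁ (E x y))
    (π₂ : X → H₂ →L[ℂ] K₂) (ρ₂ : A →⋆ₐ[ℂ] (H₂ →L[ℂ] H₂))
    (hrep₂ : ∀ x y, adjoint (π₂ x) ∘L π₂ y = ρ₂ (E x y))
    (V₁ : H →L[ℂ] H₁) (W₁ : K →L[ℂ] K₁) (hW₁ : W₁ ∘L adjoint W₁ = 1)
    (V₂ : H →L[ℂ] H₂) (W₂ : K →L[ℂ] K₂) (hW₂ : W₂ ∘L adjoint W₂ = 1)
    (hΦ₁ : ∀ x, Φ x = adjoint W₁ ∘L π₁ x ∘L V₁)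
    (hΦ₂ : ∀ x, Φ x = adjoint W₂ ∘L π₂ x ∘L V₂)
    (hd₁ : (Submodule.span ℂ {k : K₁ | ∃ x h, k = π₁ x (V₁ h)}).topologicalClosure = ⊤)
    (hd₂ : (Submodule.span ℂ {k : K₂ | ∃ x h, k = π₂ x (V₂ h)}).topologicalClosure = ⊤)
    (he₁ : (Submodule.span ℂ {h : H₁ | ∃ x k, h = adjoint (π₁ x) (W₁ k)}).topologicalClosure = ⊤)
    (he₂ : (Submodule.span ℂ {h : H₂ | ∃ x k, h = adjoint (π₂ x) (W₂ k)}).topologicalClosure = ⊤) :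
    ∃ (U₁ : H₁ ≃ₗᵢ[ℂ] H₂) (U₂ : K₁ ≃ₗᵢ[ℂ] K₂),
      (∀ x h, U₂ (π₁ x h) = π₂ x (U₁ h)) ∧
        (∀ h, U₁ (V₁ h) = V₂ h) ∧ ∀ k, U₂ (W₁ k) = W₂ k := by
  have hφ : compression ρ₁ V₁ = compression ρ₂ V₂ :=
    compression_eq_of_eqOn (Submodule.dense_iff_topologicalClosure_eq_top.2 hfull) <| by
      rintro _ ⟨x, y, rfl⟩
      rw [IsRepresentation.compression_apply_eq hrep₁ hW₁ hΦ₁,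
        IsRepresentation.compression_apply_eq hrep₂ hW₂ hΦ₂]
  replace hd₁ := dense_span_range_of_topologicalClosure_eq_top hd₁
  replace hd₂ := dense_span_range_of_topologicalClosure_eq_top hd₂
  replace he₁ := dense_span_range_of_topologicalClosure_eq_top he₁
  replace he₂ := dense_span_range_of_topologicalClosure_eq_top he₂
  obtain ⟨U₂, hU₂ρ⟩ := exists_linearIsometryEquiv_apply_rho_apply hrep₁ hrep₂ hφ hd₁ hd₂
  have hU₂ : ∀ p : X × H, U₂ (π₁ p.1 (V₁ p.2)) = π₂ p.1 (V₂ p.2) := fun p => by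
    simpa using hU₂ρ 1 p.1 p.2
  have hU₂W : ∀ k, U₂ (W₁ k) = W₂ k := fun k => U₂.apply_eq_of_inner_eq hU₂ hd₂ fun p => by
    rw [inner_apply_apply_of_eq_adjoint_comp hΦ₁, inner_apply_apply_of_eq_adjoint_comp hΦ₂]
  have hU₂π := apply_apply_adjoint_eq_of_apply_rho_apply_eq U₂ hrep₁ hrep₂ hU₂ρ hd₁
  obtain ⟨U₁, hU₁⟩ := exists_linearIsometryEquiv_of_inner_eq
    (fun p q => inner_adjoint_apply_adjoint_apply_eq U₂ hU₂π hU₂W p.1 q.1 p.2 q.2) he₁ he₂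
  refine ⟨U₁, U₂, apply_eq_apply_apply_of_apply_adjoint_apply_eq U₁ U₂ hU₂π hU₂W hU₁ he₁,
    fun h => U₁.apply_eq_of_inner_eq hU₁ he₂ fun p => ?_, hU₂W⟩
  rw [inner_adjoint_apply_of_eq_adjoint_comp hΦ₁, inner_adjoint_apply_of_eq_adjoint_comp hΦ₂]
end
end

section
/- If (π_X, v, w, H', K') is a covariant representation of (G,η,X) with Φ(x) = W'* π_X(x) V' where W' : K → K' is a coisometry and V' ∈ L(H,H'), and if [π_X(X)*W'K] = H', then the underlying *-representation π_A satisfies φ(⟨x,y⟩) = V'* π_A(⟨x,y⟩) V' for all x,y ∈ X and [π_A(A)V'H] = H', where φ is the underlying completely positive map of Φ; i.e., (π_A, H', V') is a minimal Stinespring dilation of φ. -/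
noncomputable section

open ContinuousLinearMap

/-!
Compressing by a coisometry `W'` does not change the products `Φ(x)* Φ(y)`, because
`W' W'* = 1`; hence `φ⟨x,y⟩ = V'* π_X(x)* π_X(y) V' = V'* π_A⟨x,y⟩ V'`. For minimality,
each generator `π_X(x)* W' k` of `H'` is the image under `π_X(x)*` of a limit of combinations
of vectors `π_X(y) V' h`, and `π_X(x)* π_X(y) V' h = π_A⟨x,y⟩ V' h`.
-/

theorem ContinuousLinearMap.adjoint_comp_comp_of_coisometry
    {𝕜 E F G : Type*} [RCLike 𝕜]
    [NormedAddCommGroup E] [InnerProductSpace 𝕜 E] [CompleteSpace E]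
    [NormedAddCommGroup F] [InnerProductSpace 𝕜 F] [CompleteSpace F]
    [NormedAddCommGroup G] [InnerProductSpace 𝕜 G] [CompleteSpace G]
    {W : F →L[𝕜] G} (hW : W ∘L adjoint W = 1) (S T : E →L[𝕜] G) :
    adjoint (adjoint W ∘L S) ∘L (adjoint W ∘L T) = adjoint S ∘L T := by
  calc adjoint (adjoint W ∘L S) ∘L (adjoint W ∘L T)
      = adjoint S ∘L (W ∘L adjoint W) ∘L T := by
        simp only [adjoint_comp, adjoint_adjoint, comp_assoc]
    _ = adjoint S ∘L T := by rw [hW, one_def, id_comp]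

theorem Submodule.apply_mem_topologicalClosure_span_of_mapsTo
    {R M N : Type*} [Semiring R] [TopologicalSpace R]
    [AddCommMonoid M] [Module R M] [TopologicalSpace M] [ContinuousAdd M] [ContinuousSMul R M]
    [AddCommMonoid N] [Module R N] [TopologicalSpace N] [ContinuousAdd N] [ContinuousSMul R N]
    (f : M →L[R] N) {s : Set M} {t : Set N} (hst : Set.MapsTo f s t)
    {z : M} (hz : z ∈ (span R s).topologicalClosure) : f z ∈ (span R t).topologicalClosure := by
  have hmap : (span R s).topologicalClosure.map (f : M →ₗ[R] N) ≤ (span R t).topologicalClosure :=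
    calc (span R s).topologicalClosure.map (f : M →ₗ[R] N)
        ≤ ((span R s).map (f : M →ₗ[R] N)).topologicalClosure := topologicalClosure_map f _
      _ ≤ (span R t).topologicalClosure := by
        rw [map_span]
        exact topologicalClosure_mono (span_mono hst.image_subset)
  exact hmap (mem_map_of_mem hz)

theorem Submodule.topologicalClosure_span_eq_top_of_subset
    {R M : Type*} [Semiring R] [AddCommMonoid M] [Module R M] [TopologicalSpace M]
    [ContinuousAdd M] [ContinuousConstSMul R M] {s t : Set M}
    (hs : (span R s).topologicalClosure = ⊤) (hst : s ⊆ (span R t).topologicalClosure) :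
    (span R t).topologicalClosure = ⊤ := by
  refine top_le_iff.mp (hs ▸ topologicalClosure_minimal _ ?_ (isClosed_topologicalClosure _))
  exact span_le.mpr hst

theorem stmt_13_general
    {A : Type*} [NormedRing A] [StarRing A] [NormedAlgebra ℂ A]
    {H K H' K' : Type*}
    [NormedAddCommGroup H] [InnerProductSpace ℂ H] [CompleteSpace H]
    [NormedAddCommGroup K] [InnerProductSpace ℂ K] [CompleteSpace K]
    [NormedAddCommGroup H'] [InnerProductSpace ℂ H'] [CompleteSpace H']
    [NormedAddCommGroup K'] [InnerProductSpace ℂ K'] [CompleteSpace K']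
    {X : Type*}
    (E : X → X → A)
    (Φ : X → H →L[ℂ] K) (φ : A →ₗ[ℂ] (H →L[ℂ] H))
    (hΦ : ∀ x y, adjoint (Φ x) ∘L Φ y = φ (E x y))
    (πX : X → H' →L[ℂ] K') (πA : A →⋆ₐ[ℂ] (H' →L[ℂ] H'))
    (hrep : ∀ x y, adjoint (πX x) ∘L πX y = πA (E x y))
    (V' : H →L[ℂ] H') (W' : K →L[ℂ] K') (hW' : W' ∘L adjoint W' = 1)
    (hΦeq : ∀ x, Φ x = adjoint W' ∘L πX x ∘L V')
    (hK' : (Submodule.span ℂ {k : K' | ∃ x h, k = πX x (V' h)}).topologicalClosure = ⊤)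
    (hH' : (Submodule.span ℂ {h : H' | ∃ x k, h = adjoint (πX x) (W' k)}).topologicalClosure = ⊤) :
    (∀ x y, φ (E x y) = adjoint V' ∘L πA (E x y) ∘L V') ∧
      (Submodule.span ℂ {h : H' | ∃ a h₀, h = πA a (V' h₀)}).topologicalClosure = ⊤ := by
  refine ⟨fun x y => ?_, Submodule.topologicalClosure_span_eq_top_of_subset hH' ?_⟩
  · rw [← hΦ, hΦeq, hΦeq, adjoint_comp_comp_of_coisometry hW', ← hrep, adjoint_comp]
    simp only [comp_assoc]
  · rintro _ ⟨x, k, rfl⟩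
    refine Submodule.apply_mem_topologicalClosure_span_of_mapsTo (adjoint (πX x)) ?_
      (hK' ▸ Submodule.mem_top)
    rintro _ ⟨y, h, rfl⟩
    exact ⟨E x y, h, by rw [← hrep]; rfl⟩

/-- if `(π_X,v,w,H',K')` is a covariant representation of `(G,η,X)`
with `Φ(x) = W'* π_X(x) V'` for a coisometry `W'` and `[π_X(X)*W'K] = H'`, then
`(π_A, H', V')` is a minimal Stinespring dilation of the underlying completely
positive map `φ` of `Φ`. -/
theorem stmt_13
    {A : Type*} [NormedRing A] [StarRing A] [CStarRing A] [NormedAlgebra ℂ A]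
    [CompleteSpace A] [StarModule ℂ A]
    {H K H' K' : Type*}
    [NormedAddCommGroup H] [InnerProductSpace ℂ H] [CompleteSpace H]
    [NormedAddCommGroup K] [InnerProductSpace ℂ K] [CompleteSpace K]
    [NormedAddCommGroup H'] [InnerProductSpace ℂ H'] [CompleteSpace H']
    [NormedAddCommGroup K'] [InnerProductSpace ℂ K'] [CompleteSpace K']
    {X : Type*} {G : Type*} [Group G]
    (E : X → X → A)
    (hfull : (Submodule.span ℂ {a : A | ∃ x y, a = E x y}).topologicalClosure = ⊤)
    (η : G → X → X) (hη_one : ∀ x, η 1 x = x)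
    (hη_mul : ∀ s t x, η (s * t) x = η s (η t x))
    (Φ : X → H →L[ℂ] K) (φ : A →ₗ[ℂ] (H →L[ℂ] H)) (hcp : IsCPMap φ)
    (hΦ : ∀ x y, adjoint (Φ x) ∘L Φ y = φ (E x y))
    (πX : X → H' →L[ℂ] K') (πA : A →⋆ₐ[ℂ] (H' →L[ℂ] H'))
    (hrep : ∀ x y, adjoint (πX x) ∘L πX y = πA (E x y))
    (v : G → H' →L[ℂ] H') (hv : IsUnitaryRep v)
    (w : G → K' →L[ℂ] K') (hw : IsUnitaryRep w)
    (hcov : ∀ t x, πX (η t x) = w t ∘L πX x ∘L adjoint (v t))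
    (V' : H →L[ℂ] H') (W' : K →L[ℂ] K') (hW' : W' ∘L adjoint W' = 1)
    (hΦeq : ∀ x, Φ x = adjoint W' ∘L πX x ∘L V')
    (hK' : (Submodule.span ℂ {k : K' | ∃ x h, k = πX x (V' h)}).topologicalClosure = ⊤)
    (hH' : (Submodule.span ℂ {h : H' | ∃ x k, h = adjoint (πX x) (W' k)}).topologicalClosure = ⊤) :
    (∀ x y, φ (E x y) = adjoint V' ∘L πA (E x y) ∘L V') ∧
      (Submodule.span ℂ {h : H' | ∃ a h₀, h = πA a (V' h₀)}).topologicalClosure = ⊤ :=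
  stmt_13_general E Φ φ hΦ πX πA hrep V' W' hW' hΦeq hK' hH'
end
end

section
/- Every isomorphism of full Hilbert C*-modules preserves norms: if Ψ : X → Y is a bijective map between a full Hilbert A-module X and a Hilbert B-module Y such that ⟨Ψ(x),Ψ(y)⟩ = ψ(⟨x,y⟩) for all x,y ∈ X for some *-homomorphism ψ : A → B, and Ψ⁻¹ is likewise a morphism, then ‖Ψ(x)‖ = ‖x‖ for all x ∈ X, and the underlying *-homomorphism ψ is an isomorphism onto ⟨Y,Y⟩ uniquely determined by Ψ. -/
/-!
The inner products of `X` span a dense subspace of `A`, and `χ ∘ ψ` fixes each of them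
(`χ (ψ ⟨x, y⟩) = ⟨Ψ⁻¹ Ψ x, Ψ⁻¹ Ψ y⟩ = ⟨x, y⟩`), so by continuity `χ ∘ ψ = id`. Hence `ψ` is an
injective `*`-homomorphism of C⋆-algebras, thus isometric, which gives `‖⟨Ψ x, Ψ x⟩‖ = ‖⟨x, x⟩‖`.
Symmetrically `ψ ∘ χ` is the identity on the closed span `⟨Y, Y⟩`, so `ψ` maps onto it, and `ψ` is
unique because its values on the dense set of inner products are prescribed by `Ψ`.
-/

open Set Submodule
open scoped CStarAlgebra

section ClosedSpan

variable {R M N F : Type*} [Semiring R]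
  [AddCommMonoid M] [Module R M] [TopologicalSpace M] [ContinuousAdd M] [ContinuousConstSMul R M]
  [AddCommMonoid N] [Module R N] [TopologicalSpace N]
  [FunLike F M N] [ContinuousLinearMapClass F R M N]

theorem eqOn_topologicalClosure_span [T2Space N] {f g : F} {s : Set M} (h : EqOn f g s) :
    EqOn f g (span R s).topologicalClosure :=
  (LinearMap.eqOn_span' (f := (f : M →ₗ[R] N)) (g := (g : M →ₗ[R] N)) h).closure
    (map_continuous f) (map_continuous g)

theorem ext_of_topologicalClosure_span_eq_top [T2Space N] {f g : F} {s : Set M}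
    (hs : (span R s).topologicalClosure = ⊤) (h : EqOn f g s) : f = g :=
  DFunLike.ext f g fun _ => eqOn_topologicalClosure_span h (hs ▸ mem_top)

theorem range_subset_topologicalClosure_span [ContinuousAdd N] [ContinuousConstSMul R N]
    (f : F) {s : Set M} {t : Set N}
    (hs : (span R s).topologicalClosure = ⊤) (hst : MapsTo f s t) :
    range f ⊆ (span R t).topologicalClosure := by
  calc range f = f '' closure (span R s) := by
        rw [← image_univ, ← topologicalClosure_coe, hs, top_coe]
    _ ⊆ closure (f '' span R s) := image_closure_subset_closure_image (map_continuous f)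
    _ ⊆ (span R t).topologicalClosure := closure_mono <|
      (image_span_subset (f : M →ₗ[R] N) s _).2 fun _ hm => subset_span (hst hm)

end ClosedSpan

/-- an isomorphism of Hilbert `C*`-modules from a full Hilbert
`A`-module `X` onto a Hilbert `B`-module `Y` preserves norms
(`‖Ψ(x)‖ = ‖x‖`, i.e. `‖⟨Ψx,Ψx⟩‖ = ‖⟨x,x⟩‖`), and its underlying `*`-morphism `ψ`
is injective, has range the closed span `⟨Y,Y⟩`, and is uniquely determined by `Ψ`. -/
theorem stmt_19
    {A : Type*} [NormedRing A] [StarRing A] [CStarRing A] [NormedAlgebra ℂ A]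
    [CompleteSpace A] [StarModule ℂ A]
    {B : Type*} [NormedRing B] [StarRing B] [CStarRing B] [NormedAlgebra ℂ B]
    [CompleteSpace B] [StarModule ℂ B]
    {X Y : Type*} (EA : X → X → A) (EB : Y → Y → B)
    (hfull : (Submodule.span ℂ {a : A | ∃ x y, a = EA x y}).topologicalClosure = ⊤)
    (Ψ : X → Y) (Ψinv : Y → X)
    (hinv₁ : ∀ x, Ψinv (Ψ x) = x) (hinv₂ : ∀ y, Ψ (Ψinv y) = y)
    (ψ : A →⋆ₙₐ[ℂ] B) (hψ : ∀ x y, EB (Ψ x) (Ψ y) = ψ (EA x y))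
    (χ : B →⋆ₙₐ[ℂ] A) (hχ : ∀ y₁ y₂, EA (Ψinv y₁) (Ψinv y₂) = χ (EB y₁ y₂)) :
    (∀ x, ‖EB (Ψ x) (Ψ x)‖ = ‖EA x x‖) ∧
      Function.Injective ψ ∧
      Set.range ψ =
        ((Submodule.span ℂ {b : B | ∃ y₁ y₂, b = EB y₁ y₂}).topologicalClosure : Set B) ∧
      ∀ ψ' : A →⋆ₙₐ[ℂ] B, (∀ x y, EB (Ψ x) (Ψ y) = ψ' (EA x y)) → ψ' = ψ := by
  let _ : CStarAlgebra A := {}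
  let _ : CStarAlgebra B := {}
  have hχψ : Function.LeftInverse χ ψ := DFunLike.congr_fun <|
    ext_of_topologicalClosure_span_eq_top (f := χ.comp ψ) (g := NonUnitalStarAlgHom.id ℂ A) hfull
      (by rintro _ ⟨x, y, rfl⟩; simp [← hψ, ← hχ, hinv₁])
  have hψχ : EqOn (ψ.comp χ) (NonUnitalStarAlgHom.id ℂ B)
      (span ℂ {b : B | ∃ y₁ y₂, b = EB y₁ y₂}).topologicalClosure :=
    eqOn_topologicalClosure_span (by rintro _ ⟨y₁, y₂, rfl⟩; simp [← hχ, ← hψ, hinv₂])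
  refine ⟨fun x => by rw [hψ, NonUnitalStarAlgHom.norm_map ψ hχψ.injective], hχψ.injective,
    ?_, fun ψ' hψ' => ?_⟩
  · refine (range_subset_topologicalClosure_span ψ hfull ?_).antisymm fun b hb => ⟨χ b, hψχ hb⟩
    rintro _ ⟨x, y, rfl⟩
    exact ⟨Ψ x, Ψ y, (hψ x y).symm⟩
  · refine ext_of_topologicalClosure_span_eq_top hfull ?_
    rintro _ ⟨x, y, rfl⟩
    rw [← hψ, ← hψ']
end
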